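/- Let 0 < r < n and let b = (b_1,...,b_r) be positive integers with b_1 + ... + b_r = n. Then Σ_{s=r}^{n} (-1)^s C(n,s) Σ_{a_1+...+a_r=s, a_i ≥ 1} a_1^{b_1-1}···a_r^{b_r-1} = 0. -/

import Mathlib

/-!
Write `F(s)` for the inner sum, with exponents `eᵢ = bᵢ - 1`. Splitting off the last part exhibits
`F` as the truncated convolution `s ↦ ∑_{t < s} (s - t) ^ e_last * F'(t)` of the weight `F'` of
the other parts with a polynomial kernel `K`. Its forward difference is `K(1) • F'` plus the
convolution with `Δ K`, so a kernel of degree `p` raises the degree by at most `p + 1`. For a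
single part `F(s) = s ^ e₀`, also at `s = 0` only when `e₀ ≠ 0`; as `F` is symmetric in the parts
and `r < n` forces some `bᵢ ≥ 2`, that part can go first. Hence `F` is a polynomial of degree `< n`
on all of `ℕ`, its `n`-th forward difference at `0` (the alternating sum over `0 ≤ s ≤ n`)
vanishes, and the terms with `s < r` are zero for lack of compositions.
-/

/-- Compositions of `m` into `k` positive parts. -/
def posCompositions (k m : ℕ) : Finset (Fin k → ℕ) :=
  (Finset.Nat.antidiagonalTuple k m).filter fun a => ∀ i, 0 < a i

open Finset fwdDiff

section ForwardDifference

variable {G R : Type*} [AddCommGroup G] [CommRing R]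

lemma fwdDiff_iter_zero (n : ℕ) : (Δ_[1])^[n] (0 : ℕ → G) = 0 :=
  Function.iterate_fixed (funext fun _ => sub_self 0) n

lemma fwdDiff_iter_eq_zero_of_le {f : ℕ → G} {m k : ℕ} (hf : (Δ_[1])^[m] f = 0) (hmk : m ≤ k) :
    (Δ_[1])^[k] f = 0 := by
  obtain ⟨j, rfl⟩ := Nat.exists_eq_add_of_le' hmk
  rw [Function.iterate_add_apply, hf, fwdDiff_iter_zero]

def truncConv (K g : ℕ → R) (s : ℕ) : R :=
  ∑ t ∈ range s, K (s - t) * g t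

lemma fwdDiff_truncConv (K g : ℕ → R) :
    Δ_[1] (truncConv K g) = K 1 • g + truncConv (Δ_[1] K) g := by
  ext s
  simp only [fwdDiff, truncConv, Pi.add_apply, Pi.smul_apply, smul_eq_mul, sum_range_succ,
    Nat.add_sub_cancel_left, add_sub_right_comm, ← sum_sub_distrib, ← sub_mul]
  rw [add_comm]
  congr 1
  refine sum_congr rfl fun t ht => ?_
  rw [Nat.sub_add_comm (mem_range.1 ht).le]

lemma fwdDiff_iter_truncConv_eq_zero {K g : ℕ → R} {p d : ℕ} (hK : (Δ_[1])^[p] K = 0)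
    (hg : (Δ_[1])^[d] g = 0) : (Δ_[1])^[p + d] (truncConv K g) = 0 := by
  induction p generalizing K with
  | zero =>
    obtain rfl : K = 0 := hK
    have : truncConv 0 g = 0 := funext fun s => by simp [truncConv]
    rw [this, fwdDiff_iter_zero]
  | succ p ih =>
    rw [add_right_comm, Function.iterate_succ_apply, fwdDiff_truncConv, fwdDiff_iter_add,
      fwdDiff_iter_const_smul, ih (by rwa [← Function.iterate_succ_apply]),
      fwdDiff_iter_eq_zero_of_le hg (by omega), smul_zero, add_zero]

lemma fwdDiff_iter_natCast_pow_eq_zero {j n : ℕ} (h : j < n) :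
    (Δ_[1])^[n] (fun m : ℕ => (m : R) ^ j) = 0 := by
  ext m
  simpa [fwdDiff_iter_eq_sum_shift] using
    congrFun (fwdDiff_iter_pow_eq_zero_of_lt (R := R) h) m

end ForwardDifference

lemma mem_posCompositions {k m : ℕ} {a : Fin k → ℕ} :
    a ∈ posCompositions k m ↔ ∑ i, a i = m ∧ ∀ i, 0 < a i := by
  simp [posCompositions, Finset.Nat.mem_antidiagonalTuple]

lemma posCompositions_eq_empty {k m : ℕ} (h : m < k) : posCompositions k m = ∅ := by
  refine eq_empty_of_forall_notMem fun a ha => h.not_ge ?_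
  obtain ⟨rfl, hpos⟩ := mem_posCompositions.1 ha
  simpa using sum_le_sum fun i (_ : i ∈ univ) => Nat.one_le_iff_ne_zero.2 (hpos i).ne'

lemma comp_perm_mem_posCompositions {k m : ℕ} {a : Fin k → ℕ} (σ : Equiv.Perm (Fin k)) :
    a ∘ σ ∈ posCompositions k m ↔ a ∈ posCompositions k m := by
  simp only [mem_posCompositions, Function.comp_apply, Equiv.sum_comp,
    σ.forall_congr_right (q := fun i => 0 < a i)]

lemma sum_posCompositions_succ {M : Type*} [AddCommMonoid M] (k s : ℕ)
    (F : (Fin (k + 1) → ℕ) → M) :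
    ∑ a ∈ posCompositions (k + 1) s, F a
      = ∑ t ∈ range s, ∑ a ∈ posCompositions k t, F (Fin.snoc a (s - t)) := by
  rw [sum_sigma']
  symm
  refine sum_nbij' (fun p => Fin.snoc p.2 (s - p.1)) (fun a => ⟨∑ i, Fin.init a i, Fin.init a⟩)
    ?_ ?_ ?_ ?_ fun _ _ => rfl
  · rintro ⟨t, a⟩ h
    obtain ⟨hts, rfl, hpos⟩ := by simpa [mem_posCompositions] using h
    refine mem_posCompositions.2 ⟨?_, fun i => ?_⟩
    · simp only [Fin.sum_univ_castSucc, Fin.snoc_castSucc, Fin.snoc_last]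
      omega
    · induction i using Fin.lastCases with
      | last => simpa using hts
      | cast j => simpa using hpos j
  · intro a ha
    obtain ⟨hsum, hpos⟩ := mem_posCompositions.1 ha
    rw [Fin.sum_univ_castSucc] at hsum
    have hlast := hpos (Fin.last k)
    simp only [mem_sigma, mem_range, mem_posCompositions, true_and]
    exact ⟨by simp only [Fin.init]; omega, fun i => hpos _⟩
  · rintro ⟨t, a⟩ h
    obtain ⟨-, rfl, -⟩ := by simpa [mem_posCompositions] using h
    simp [Fin.init_snoc]
  · intro a ha
    obtain ⟨hsum, -⟩ := mem_posCompositions.1 ha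
    rw [Fin.sum_univ_castSucc] at hsum
    rw [show s - ∑ i, Fin.init a i = a (Fin.last k) by simp only [Fin.init]; omega,
      Fin.snoc_init_self]

section CompositionPowSum

variable (R : Type*) [CommRing R] {k : ℕ}

def compositionPowSum (e : Fin k → ℕ) (s : ℕ) : R :=
  ∑ a ∈ posCompositions k s, ∏ i, (a i : R) ^ e i

lemma compositionPowSum_eq_zero_of_lt (e : Fin k → ℕ) {s : ℕ} (h : s < k) :
    compositionPowSum R e s = 0 := by
  simp [compositionPowSum, posCompositions_eq_empty h]

lemma compositionPowSum_one (e : Fin 1 → ℕ) (he : e 0 ≠ 0) :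
    compositionPowSum R e = fun s : ℕ => (s : R) ^ e 0 := by
  ext s
  rcases Nat.eq_zero_or_pos s with rfl | hs
  · simp [compositionPowSum_eq_zero_of_lt R e zero_lt_one, he]
  · have : posCompositions 1 s = {fun _ => s} := by
      ext a
      simp only [mem_posCompositions, Fin.sum_univ_one, Fin.forall_fin_one, mem_singleton]
      exact ⟨fun h => funext fun i => by rw [Fin.fin_one_eq_zero i, h.1], by rintro rfl; simp [hs]⟩
    simp [compositionPowSum, this]

lemma compositionPowSum_succ (e : Fin (k + 1) → ℕ) :
    compositionPowSum R e =
      truncConv (fun m => (m : R) ^ e (Fin.last k)) (compositionPowSum R (Fin.init e)) := by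
  ext s
  simp only [compositionPowSum, truncConv, sum_posCompositions_succ, mul_sum]
  refine sum_congr rfl fun t _ => sum_congr rfl fun a _ => ?_
  simp [Fin.prod_univ_castSucc, Fin.init, mul_comm]

lemma compositionPowSum_comp_perm (e : Fin k → ℕ) (σ : Equiv.Perm (Fin k)) :
    compositionPowSum R (e ∘ σ) = compositionPowSum R e := by
  ext s
  refine sum_nbij' (· ∘ σ.symm) (· ∘ σ) ?_ ?_ ?_ ?_ ?_
  · exact fun a ha => (comp_perm_mem_posCompositions σ.symm).2 ha
  · exact fun a ha => (comp_perm_mem_posCompositions σ).2 ha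
  · exact fun a _ => funext fun i => by simp
  · exact fun a _ => funext fun i => by simp
  · intro a _
    simpa using Equiv.prod_comp σ fun j => (a (σ.symm j) : R) ^ e j

theorem fwdDiff_iter_compositionPowSum_eq_zero {k : ℕ} (e : Fin (k + 1) → ℕ) (he : e 0 ≠ 0) :
    (Δ_[1])^[∑ i, (e i + 1)] (compositionPowSum R e) = 0 := by
  induction k with
  | zero =>
    rw [compositionPowSum_one R e he, Fin.sum_univ_one]
    exact fwdDiff_iter_natCast_pow_eq_zero (Nat.lt_succ_self _)
  | succ k ih =>
    rw [compositionPowSum_succ, Fin.sum_univ_castSucc, add_comm]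
    exact fwdDiff_iter_truncConv_eq_zero (fwdDiff_iter_natCast_pow_eq_zero (Nat.lt_succ_self _))
      (ih (Fin.init e) he)

end CompositionPowSum

lemma sum_range_neg_one_pow_mul_choose_mul_eq_zero {R : Type*} [CommRing R] {f : ℕ → R} {n : ℕ}
    (hf : (Δ_[1])^[n] f = 0) :
    ∑ s ∈ range (n + 1), (-1 : R) ^ s * n.choose s * f s = 0 := by
  have h := congrFun hf 0
  rw [fwdDiff_iter_eq_sum_shift] at h
  calc ∑ s ∈ range (n + 1), (-1 : R) ^ s * n.choose s * f s
      = (-1) ^ n * ∑ s ∈ range (n + 1), ((-1 : ℤ) ^ (n - s) * n.choose s) • f (0 + s • 1) := by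
        rw [mul_sum]
        refine sum_congr rfl fun s hs => ?_
        obtain ⟨m, rfl⟩ := Nat.exists_eq_add_of_le (mem_range.1 hs |> Nat.le_of_lt_succ)
        simp only [zsmul_eq_mul, zero_add, smul_eq_mul, mul_one, Int.cast_mul, Int.cast_pow,
          Int.cast_neg, Int.cast_one, Int.cast_natCast, Nat.add_sub_cancel_left]
        have : (-1 : R) ^ (s + m) * (-1) ^ m = (-1) ^ s := by
          rw [pow_add, mul_assoc, ← pow_add, Even.neg_one_pow ⟨m, rfl⟩, mul_one]
        rw [← this]
        ring
    _ = 0 := by rw [h, Pi.zero_apply, mul_zero]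

theorem stmt4_general (n r : ℕ) (hrn : r < n) (b : Fin r → ℕ) (hb : ∀ i, 0 < b i)
    (hsum : ∑ i, b i = n) :
    ∑ s ∈ Finset.Icc r n, (-1 : ℤ) ^ s * (n.choose s : ℤ) *
      ∑ a ∈ posCompositions r s, ∏ i, (a i : ℤ) ^ (b i - 1) = 0 := by
  obtain ⟨j, hj⟩ : ∃ j, 2 ≤ b j := by
    by_contra! h
    have : ∑ i, b i ≤ ∑ _i : Fin r, 1 := sum_le_sum fun i _ => Nat.le_of_lt_succ (h i)
    simp only [sum_const, card_univ, Fintype.card_fin, smul_eq_mul, mul_one] at this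
    omega
  obtain ⟨k, rfl⟩ : ∃ k, r = k + 1 := ⟨r - 1, by have := j.pos; omega⟩
  set e : Fin (k + 1) → ℕ := fun i => b i - 1
  change ∑ s ∈ Icc (k + 1) n, (-1 : ℤ) ^ s * n.choose s * compositionPowSum ℤ e s = 0
  have hdeg : ∑ i, ((e ∘ Equiv.swap 0 j) i + 1) = n :=
    calc ∑ i, ((e ∘ Equiv.swap 0 j) i + 1)
        = ∑ i, (e i + 1) := Equiv.sum_comp (Equiv.swap 0 j) fun i => e i + 1
      _ = n := (sum_congr rfl fun i _ => Nat.sub_add_cancel (hb i)).trans hsum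
  have hΔ := fwdDiff_iter_compositionPowSum_eq_zero ℤ (e ∘ Equiv.swap 0 j) (by simp [e]; omega)
  rw [hdeg, compositionPowSum_comp_perm] at hΔ
  rw [← sum_range_neg_one_pow_mul_choose_mul_eq_zero hΔ]
  refine sum_subset (fun s hs => by simp at hs ⊢; omega) fun s hs hs' => ?_
  rw [compositionPowSum_eq_zero_of_lt ℤ e (by simp at hs hs'; omega), mul_zero]

theorem stmt4 (n r : ℕ) (hr : 0 < r) (hrn : r < n) (b : Fin r → ℕ) (hb : ∀ i, 0 < b i)
    (hsum : ∑ i, b i = n) :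
    ∑ s ∈ Finset.Icc r n, (-1 : ℤ) ^ s * (n.choose s : ℤ) *
      ∑ a ∈ posCompositions r s, ∏ i, (a i : ℤ) ^ (b i - 1) = 0 :=
  stmt4_general n r hrn b hb hsum
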